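/- The diagonal entries of the Pauli-twirled POVM elements satisfy ⟨y|Π_x^{Pauli}|y⟩ = Σ_{s∈{0,1}^n} (−1)^{(x⊕y)·s} m_s, where m_s = [M]_{ss} are the diagonal PTM entries of the original measurement channel indexed by Z-type Pauli words Z[s]. Consequently ⟨y|Π_x^{Pauli}|y⟩ depends only on x⊕y. -/

import Mathlib

open ComplexOrder Matrix Finset

/-- Single-qubit Pauli matrix `i^{ax·az} X^{ax} Z^{az}`:
`(false,false) = I`, `(true,false) = X`, `(false,true) = Z`, `(true,true) = Y`. -/
noncomputable def pauli1 (ax az : Bool) : Matrix Bool Bool ℂ := fun x y =>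
  match ax, az with
  | false, false => if x = y then 1 else 0
  | true,  false => if x = y then 0 else 1
  | false, true  => if x = y then (if x then -1 else 1) else 0
  | true,  true  => if x = false ∧ y = true then -Complex.I
                    else if x = true ∧ y = false then Complex.I else 0

/-- The `n`-qubit Pauli word with X-part `a` and Z-part `b`. -/
noncomputable def pauliW {n : ℕ} (a b : Fin n → Bool) :
    Matrix (Fin n → Bool) (Fin n → Bool) ℂ :=
  fun x y => ∏ i, pauli1 (a i) (b i) (x i) (y i)

/-- The measurement channel of a POVM `{Pm x}`. -/
noncomputable def mchan {n : ℕ}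
    (Pm : (Fin n → Bool) → Matrix (Fin n → Bool) (Fin n → Bool) ℂ)
    (ρ : Matrix (Fin n → Bool) (Fin n → Bool) ℂ) :
    Matrix (Fin n → Bool) (Fin n → Bool) ℂ :=
  ∑ x, (Pm x * ρ).trace • Matrix.single x x (1 : ℂ)

/-- Bitwise inner product. -/
def bdot {n : ℕ} (s x : Fin n → Bool) : ℕ := (Finset.univ.filter fun i => s i ∧ x i).card

/-!
Conjugation by the Pauli word with X-part `a` maps `|z⟩⟨z|` to `|a ⊕ z⟩⟨a ⊕ z|` and permutes the
diagonal of a diagonal matrix by `z ↦ a ⊕ z`. Since a measurement channel outputs diagonal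
matrices, the twirl averages the POVM over bit-flip translations:
`⟨y|Π^Pauli_x|y⟩ = 2⁻ⁿ Σ_z ⟨z ⊕ x ⊕ y|Π_z|z ⊕ x ⊕ y⟩`, a function of `x ⊕ y` alone.
The `Z`-type PTM entries `m_s` are the `(ℤ/2)ⁿ`-Fourier coefficients of the same function,
so Fourier inversion gives the formula.
-/

section

variable {ι : Type*}

def bxor (u v : ι → Bool) : ι → Bool := fun k => xor (u k) (v k)

theorem bxor_bxor_cancel_left (u v : ι → Bool) : bxor u (bxor u v) = v := by
  funext k; simp [bxor]

theorem bxor_involutive (u : ι → Bool) : Function.Involutive (bxor u) :=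
  bxor_bxor_cancel_left u

theorem bxor_eq_false_iff {u v : ι → Bool} : bxor u v = (fun _ => false) ↔ v = u := by
  constructor
  · intro h
    rw [← bxor_bxor_cancel_left u v, h]
    funext k; simp [bxor]
  · rintro rfl
    funext k; simp [bxor]

theorem eq_bxor_iff_eq_bxor {u v w : ι → Bool} : u = bxor v w ↔ w = bxor v u := by
  constructor <;> rintro rfl <;> exact (bxor_bxor_cancel_left _ _).symm

end

section

variable {n : ℕ}

theorem pauli1_mul_pauli1_apply (ax az x y w : Bool) :
    pauli1 ax az x y * pauli1 ax az y w = if y = xor ax x ∧ w = x then 1 else 0 := by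
  cases ax <;> cases az <;> cases x <;> cases y <;> cases w <;> simp [pauli1]

theorem pauliW_apply_mul_pauliW_apply (a b u z v : Fin n → Bool) :
    pauliW a b u z * pauliW a b z v = if z = bxor a u ∧ v = u then 1 else 0 := by
  simp only [pauliW, ← Finset.prod_mul_distrib, pauli1_mul_pauli1_apply, Finset.prod_boole]
  simp [bxor, funext_iff, forall_and]

theorem pauliW_mul_single_mul_pauliW (a b z : Fin n → Bool) :
    pauliW a b * single z z (1 : ℂ) * pauliW a b = single (bxor a z) (bxor a z) 1 := by
  ext u v
  simp only [mul_apply, single_apply, ite_and, mul_ite, ite_mul, mul_one, zero_mul, mul_zero,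
    Finset.sum_ite_eq, Finset.mem_univ, if_true, pauliW_apply_mul_pauliW_apply]
  by_cases h : bxor a z = u
  · subst h
    simp [bxor_bxor_cancel_left, eq_comm]
  · have hz : z ≠ bxor a u := fun hz => h (eq_bxor_iff_eq_bxor.mp hz).symm
    simp [h, hz]

theorem pauliW_mul_diagonal_mul_pauliW_apply_self (a b : Fin n → Bool)
    (d : (Fin n → Bool) → ℂ) (x : Fin n → Bool) :
    (pauliW a b * diagonal d * pauliW a b) x x = d (bxor a x) := by
  simp only [mul_apply, diagonal_apply, mul_ite, mul_zero, Finset.sum_ite_eq', Finset.mem_univ,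
    if_true, mul_comm _ (d _), mul_assoc, pauliW_apply_mul_pauliW_apply, and_true, mul_one]

theorem neg_one_pow_bdot (u s : Fin n → Bool) :
    (-1 : ℂ) ^ bdot u s = ∏ i, if u i ∧ s i then -1 else 1 := by
  rw [bdot, Finset.prod_ite, Finset.prod_const, Finset.prod_const, one_pow, mul_one]

theorem neg_one_pow_bdot_bxor (u v s : Fin n → Bool) :
    (-1 : ℂ) ^ bdot (bxor u v) s = (-1) ^ bdot u s * (-1) ^ bdot v s := by
  have h : ∀ p q r : Bool, (if xor p q ∧ r then (-1 : ℂ) else 1)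
      = (if p ∧ r then -1 else 1) * (if q ∧ r then -1 else 1) := by
    intro p q r; cases p <;> cases q <;> cases r <;> norm_num
  simp only [neg_one_pow_bdot, ← Finset.prod_mul_distrib]
  exact Finset.prod_congr rfl fun i _ => h _ _ _

theorem pauliW_false_left (s : Fin n → Bool) :
    pauliW (fun _ => false) s = diagonal fun u => (-1 : ℂ) ^ bdot u s := by
  ext u v
  have h : ∀ i, pauli1 false (s i) (u i) (v i)
      = if u i = v i then (if u i ∧ s i then -1 else 1) else 0 := by
    intro i; cases s i <;> cases u i <;> cases v i <;> simp [pauli1]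
  by_cases huv : u = v
  · subst huv; simp [pauliW, h, neg_one_pow_bdot]
  · obtain ⟨i, hi⟩ := Function.ne_iff.mp huv
    simp only [pauliW, h, diagonal_apply_ne _ huv]
    exact Finset.prod_eq_zero (Finset.mem_univ i) (if_neg hi)

theorem sum_neg_one_pow_bdot (t : Fin n → Bool) :
    ∑ s, (-1 : ℂ) ^ bdot t s = if t = (fun _ => false) then 2 ^ n else 0 := by
  have hfactor : ∀ i, ∑ b : Bool, (if t i ∧ b then (-1 : ℂ) else 1) = if t i then 0 else 2 := by
    intro i; cases t i <;> norm_num [Fintype.sum_bool]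
  simp only [neg_one_pow_bdot]
  rw [← Fintype.prod_sum fun i b => if t i ∧ b = true then (-1 : ℂ) else 1]
  simp only [hfactor]
  split_ifs with ht
  · simp [ht]
  · obtain ⟨i, hi⟩ := Function.ne_iff.mp ht
    exact Finset.prod_eq_zero (Finset.mem_univ i) (by simpa using hi)

theorem sum_neg_one_pow_bdot_mul_sum (f : (Fin n → Bool) → ℂ) (d : Fin n → Bool) :
    ∑ s, (-1 : ℂ) ^ bdot d s * ∑ w, (-1) ^ bdot w s * f w = 2 ^ n * f d := by
  calc ∑ s, (-1 : ℂ) ^ bdot d s * ∑ w, (-1) ^ bdot w s * f w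
      = ∑ w, (∑ s, (-1 : ℂ) ^ bdot (bxor d w) s) * f w := by
        simp only [Finset.mul_sum, Finset.sum_mul, neg_one_pow_bdot_bxor, mul_assoc]
        exact Finset.sum_comm
    _ = 2 ^ n * f d := by
        simp only [sum_neg_one_pow_bdot, ite_mul, zero_mul, bxor_eq_false_iff, Finset.sum_ite_eq',
          Finset.mem_univ, if_true]

theorem mchan_eq_diagonal (Pm : (Fin n → Bool) → Matrix (Fin n → Bool) (Fin n → Bool) ℂ)
    (ρ : Matrix (Fin n → Bool) (Fin n → Bool) ℂ) :
    mchan Pm ρ = diagonal fun u => (Pm u * ρ).trace := by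
  ext u v
  simp [mchan, Matrix.sum_apply, single_apply, diagonal_apply, ite_and]

/-- The total probability, summed over input basis states, that the outcome differs from the
input by the bit flips `w`. -/
def flipWeight (Pm : (Fin n → Bool) → Matrix (Fin n → Bool) (Fin n → Bool) ℂ)
    (w : Fin n → Bool) : ℂ :=
  ∑ z, Pm z (bxor z w) (bxor z w)

theorem twirl_apply_self {Pm PmP : (Fin n → Bool) → Matrix (Fin n → Bool) (Fin n → Bool) ℂ}
    (hP : ∀ ρ, mchan PmP ρ
        = ((1 : ℂ) / 4 ^ n) •
            ∑ a, ∑ b, pauliW a b * mchan Pm (pauliW a b * ρ * pauliW a b) * pauliW a b)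
    (x y : Fin n → Bool) :
    PmP x y y = 1 / 2 ^ n * flipWeight Pm (bxor x y) := by
  have hconj : ∀ a b, (pauliW a b * mchan Pm (pauliW a b * single y y 1 * pauliW a b) *
      pauliW a b) x x = Pm (bxor a x) (bxor a y) (bxor a y) := by
    intro a b
    simp [pauliW_mul_single_mul_pauliW, mchan_eq_diagonal,
      pauliW_mul_diagonal_mul_pauliW_apply_self, trace_mul_single]
  have hshift : ∀ a, bxor (bxor a x) (bxor x y) = bxor a y := by
    intro a; funext k; simp [bxor]
  calc PmP x y y = mchan PmP (single y y 1) x x := by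
        simp [mchan_eq_diagonal, trace_mul_single]
    _ = 1 / 4 ^ n * ∑ a, ∑ _b : Fin n → Bool, Pm (bxor a x) (bxor a y) (bxor a y) := by
        simp only [hP, Matrix.smul_apply, Matrix.sum_apply, hconj, smul_eq_mul]
    _ = 1 / 2 ^ n * ∑ a, Pm (bxor a x) (bxor a y) (bxor a y) := by
        have h4 : (4 : ℂ) ^ n = 2 ^ n * 2 ^ n := by rw [← mul_pow]; norm_num
        simp only [Finset.sum_const, Finset.card_univ, Fintype.card_fun, Fintype.card_bool,
          Fintype.card_fin, nsmul_eq_mul, Nat.cast_pow, Nat.cast_ofNat, ← Finset.mul_sum, h4]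
        field_simp
    _ = 1 / 2 ^ n * flipWeight Pm (bxor x y) := by
        have hbij : Function.Bijective fun a => bxor a x :=
          Function.Involutive.bijective fun a => by funext k; simp [bxor]
        rw [flipWeight]
        congr 1
        exact Fintype.sum_bijective _ hbij _ (fun z => Pm z (bxor z (bxor x y)) (bxor z (bxor x y)))
          fun a => by simp only [hshift]

theorem trace_pauliZ_mul_mchan_pauliZ
    (Pm : (Fin n → Bool) → Matrix (Fin n → Bool) (Fin n → Bool) ℂ) (s : Fin n → Bool) :
    (pauliW (fun _ => false) s * mchan Pm (pauliW (fun _ => false) s)).trace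
      = ∑ w, (-1 : ℂ) ^ bdot w s * flipWeight Pm w := by
  calc (pauliW (fun _ => false) s * mchan Pm (pauliW (fun _ => false) s)).trace
      = ∑ z, ∑ u, (-1 : ℂ) ^ bdot (bxor z u) s * Pm z u u := by
        rw [pauliW_false_left, mchan_eq_diagonal, diagonal_mul_diagonal, trace_diagonal]
        simp only [trace, diag_apply, mul_diagonal, Finset.mul_sum, neg_one_pow_bdot_bxor]
        exact Finset.sum_congr rfl fun z _ => Finset.sum_congr rfl fun u _ => by ring
    _ = ∑ z, ∑ w, (-1 : ℂ) ^ bdot w s * Pm z (bxor z w) (bxor z w) := by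
        refine Finset.sum_congr rfl fun z _ => ?_
        rw [← (bxor_involutive z).bijective.sum_comp]
        simp only [bxor_bxor_cancel_left]
    _ = ∑ w, (-1 : ℂ) ^ bdot w s * flipWeight Pm w := by
        rw [Finset.sum_comm]
        simp only [flipWeight, Finset.mul_sum]

end

theorem pauli_twirl_diagonal_entries_general {n : ℕ}
    (Pm PmP : (Fin n → Bool) → Matrix (Fin n → Bool) (Fin n → Bool) ℂ)
    (hP : ∀ ρ, mchan PmP ρ
        = ((1 : ℂ) / 4 ^ n) •
            ∑ a, ∑ b, pauliW a b * mchan Pm (pauliW a b * ρ * pauliW a b) * pauliW a b) :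
    (∀ x y : Fin n → Bool,
        PmP x y y = ((1 : ℂ) / 2 ^ n) *
          ∑ s, (-1 : ℂ) ^ bdot (fun k => xor (x k) (y k)) s *
            (((1 : ℂ) / 2 ^ n) *
              (pauliW (fun _ => false) s * mchan Pm (pauliW (fun _ => false) s)).trace)) ∧
    ∀ x y x' y' : Fin n → Bool,
      (fun k => xor (x k) (y k)) = (fun k => xor (x' k) (y' k)) →
      PmP x y y = PmP x' y' y' := by
  refine ⟨fun x y => ?_, fun x y x' y' hxy => ?_⟩
  · show _ = _ * ∑ s, (-1 : ℂ) ^ bdot (bxor x y) s * _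
    rw [twirl_apply_self hP]
    simp only [trace_pauliZ_mul_mchan_pauliZ, mul_left_comm _ (1 / 2 ^ n : ℂ), ← Finset.mul_sum]
    rw [sum_neg_one_pow_bdot_mul_sum (flipWeight Pm) (bxor x y)]
    field_simp
  · rw [twirl_apply_self hP, twirl_apply_self hP]
    congr 2

/-- The diagonal entries of the Pauli-twirled POVM elements are the `(ℤ/2)^n`-Fourier
transform of the diagonal PTM entries `m_s = [M]_{ss} = (1/2^n) tr[Z[s] M(Z[s])]`
(indexed by the Z-type Pauli words `Z[s] = pauliW 0 s`), suitably normalized: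
`⟨y|PmP_x|y⟩ = (1/2^n) Σ_s (−1)^{(x⊕y)·s} m_s`.
Consequently `⟨y|PmP_x|y⟩` depends only on `x⊕y`. -/
theorem pauli_twirl_diagonal_entries {n : ℕ}
    (Pm PmP : (Fin n → Bool) → Matrix (Fin n → Bool) (Fin n → Bool) ℂ)
    (hpos : ∀ x, (Pm x).PosSemidef) (hsum : ∑ x, Pm x = 1)
    (hP : ∀ ρ, mchan PmP ρ
        = ((1 : ℂ) / 4 ^ n) •
            ∑ a, ∑ b, pauliW a b * mchan Pm (pauliW a b * ρ * pauliW a b) * pauliW a b) :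
    (∀ x y : Fin n → Bool,
        PmP x y y = ((1 : ℂ) / 2 ^ n) *
          ∑ s, (-1 : ℂ) ^ bdot (fun k => xor (x k) (y k)) s *
            (((1 : ℂ) / 2 ^ n) *
              (pauliW (fun _ => false) s * mchan Pm (pauliW (fun _ => false) s)).trace)) ∧
    ∀ x y x' y' : Fin n → Bool,
      (fun k => xor (x k) (y k)) = (fun k => xor (x' k) (y' k)) →
      PmP x y y = PmP x' y' y' :=
  pauli_twirl_diagonal_entries_general Pm PmP hP
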